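/- arXiv:quant-ph/0510022 — 5 statements merged into one kernel-verified Lean document; each statement's English description precedes it below -/
import Mathlib

section
/- Let φ₀, φ₁ be unit vectors in ℂ² with 0 < |⟨φ₀, φ₁⟩| < 1, let p₀, p₁ > 0 be real numbers, and let C be a 2×2 complex matrix with Tr(C) ≠ 0. Then it is impossible that both the 4×4 block matrix ρ = [[p₀·φ₀φ₀†, Cᴴ],[C, p₁·φ₁φ₁†]] and its partial transpose with respect to the first (block) factor, ρ^{T_A} = [[p₀·φ₀φ₀†, C],[Cᴴ, p₁·φ₁φ₁†]], are positive semidefinite. (Equivalently: a bipartite state whose two conditional states on Bob's side are pure, non-identical and non-orthogonal, and whose off-diagonal block has nonzero trace, cannot be PPT, hence cannot be separable.) -/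
open Matrix
open scoped ComplexOrder

/-!
A vector `(x, 0)` with `A x = 0` is isotropic for a positive semidefinite block matrix
`[[A, B], [C, D]]`, hence lies in its kernel, so `C x = 0`. Applied to `ρ`, this makes `C` vanish
on `φ₀^⊥`; applied to `ρ^{T_A}`, where `C` is the upper right block, it makes `C` vanish on
`φ₁^⊥`. Hence `C x = ⟨φ₀, x⟩ C φ₀ = ⟨φ₁, x⟩ C φ₁` for all `x`, which gives
`C φ₀ = |⟨φ₀, φ₁⟩|² C φ₀`; as `|⟨φ₀, φ₁⟩| < 1`, `C φ₀ = 0` and so `C = 0`, contradicting `Tr C ≠ 0`.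
-/

variable {𝕜 : Type*} [RCLike 𝕜] {m n : Type*} [Fintype n]

namespace Matrix.PosSemidef

variable [Fintype m] {A : Matrix n n 𝕜} {B : Matrix n m 𝕜} {C : Matrix m n 𝕜} {D : Matrix m m 𝕜}

theorem mulVec₂₁_eq_zero_of_mulVec₁₁_eq_zero (h : (fromBlocks A B C D).PosSemidef)
    {x : n → 𝕜} (hx : A *ᵥ x = 0) : C *ᵥ x = 0 := by
  have hq : star (Sum.elim x 0) ⬝ᵥ fromBlocks A B C D *ᵥ Sum.elim x (0 : m → 𝕜) = 0 := by
    simp [Function.star_sumElim, fromBlocks_mulVec, sumElim_dotProduct_sumElim, hx]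
  have hz := (h.dotProduct_mulVec_zero_iff _).mp hq
  ext i
  simpa [fromBlocks_mulVec] using congrFun hz (Sum.inr i)

theorem mulVec₁₂_eq_zero_of_mulVec₂₂_eq_zero (h : (fromBlocks A B C D).PosSemidef)
    {y : m → 𝕜} (hy : D *ᵥ y = 0) : B *ᵥ y = 0 := by
  have hq : star (Sum.elim 0 y) ⬝ᵥ fromBlocks A B C D *ᵥ Sum.elim (0 : n → 𝕜) y = 0 := by
    simp [Function.star_sumElim, fromBlocks_mulVec, sumElim_dotProduct_sumElim, hy]
  have hz := (h.dotProduct_mulVec_zero_iff _).mp hq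
  ext i
  simpa [fromBlocks_mulVec] using congrFun hz (Sum.inl i)

end Matrix.PosSemidef

theorem Matrix.smul_vecMulVec_star_mulVec_eq_zero (c : 𝕜) {φ x : n → 𝕜}
    (hx : star φ ⬝ᵥ x = 0) : (c • vecMulVec φ (star φ)) *ᵥ x = 0 := by
  rw [smul_mulVec, vecMulVec_mulVec, hx]
  simp

theorem Matrix.mulVec_eq_dotProduct_smul_of_orthogonal {M : Matrix m n 𝕜} {φ : n → 𝕜}
    (hφ : star φ ⬝ᵥ φ = 1) (hM : ∀ x, star φ ⬝ᵥ x = 0 → M *ᵥ x = 0) (x : n → 𝕜) :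
    M *ᵥ x = (star φ ⬝ᵥ x) • M *ᵥ φ := by
  have horth : star φ ⬝ᵥ (x - (star φ ⬝ᵥ x) • φ) = 0 := by
    rw [dotProduct_sub, dotProduct_smul, hφ, smul_eq_mul, mul_one, sub_self]
  have := hM _ horth
  rwa [mulVec_sub, mulVec_smul, sub_eq_zero] at this

theorem Matrix.eq_zero_of_mulVec_orthogonal_eq_zero {M : Matrix m n 𝕜} {φ₀ φ₁ : n → 𝕜}
    (hφ₀ : star φ₀ ⬝ᵥ φ₀ = 1) (hφ₁ : star φ₁ ⬝ᵥ φ₁ = 1) (hlt : ‖star φ₀ ⬝ᵥ φ₁‖ < 1)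
    (hM₀ : ∀ x, star φ₀ ⬝ᵥ x = 0 → M *ᵥ x = 0) (hM₁ : ∀ x, star φ₁ ⬝ᵥ x = 0 → M *ᵥ x = 0) :
    M = 0 := by
  have h₀ := mulVec_eq_dotProduct_smul_of_orthogonal hφ₀ hM₀
  have h₁ := mulVec_eq_dotProduct_smul_of_orthogonal hφ₁ hM₁
  have hfix : M *ᵥ φ₀ = ((‖star φ₀ ⬝ᵥ φ₁‖ : 𝕜) ^ 2) • M *ᵥ φ₀ :=
    calc M *ᵥ φ₀ = (star φ₁ ⬝ᵥ φ₀) • (star φ₀ ⬝ᵥ φ₁) • M *ᵥ φ₀ :=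
          (h₁ φ₀).trans (by rw [h₀ φ₁])
      _ = ((‖star φ₀ ⬝ᵥ φ₁‖ : 𝕜) ^ 2) • M *ᵥ φ₀ := by
        rw [smul_smul, star_dotProduct φ₁, RCLike.star_def, RCLike.conj_mul]
  have hcoef : (1 - (‖star φ₀ ⬝ᵥ φ₁‖ : 𝕜) ^ 2) ≠ 0 := by
    rw [sub_ne_zero, ne_comm]
    exact_mod_cast (pow_lt_one₀ (norm_nonneg _) hlt two_ne_zero).ne
  have hφ₀_ker : M *ᵥ φ₀ = 0 := by
    have : (1 - (‖star φ₀ ⬝ᵥ φ₁‖ : 𝕜) ^ 2) • M *ᵥ φ₀ = 0 := by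
      rw [sub_smul, one_smul, ← hfix, sub_self]
    exact (smul_eq_zero.mp this).resolve_left hcoef
  exact ext_iff_mulVec.mpr fun x => by rw [h₀, hφ₀_ker, smul_zero, zero_mulVec]

theorem pure_conditional_states_not_ppt_general
    (φ₀ φ₁ : Fin 2 → ℂ)
    (hunit₀ : star φ₀ ⬝ᵥ φ₀ = 1) (hunit₁ : star φ₁ ⬝ᵥ φ₁ = 1)
    (hover_lt : ‖star φ₀ ⬝ᵥ φ₁‖ < 1)
    (p₀ p₁ : ℝ)
    (C : Matrix (Fin 2) (Fin 2) ℂ) (hC : C.trace ≠ 0) :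
    ¬ ((Matrix.fromBlocks ((p₀ : ℂ) • Matrix.vecMulVec φ₀ (star φ₀)) Cᴴ
          C ((p₁ : ℂ) • Matrix.vecMulVec φ₁ (star φ₁))).PosSemidef ∧
       (Matrix.fromBlocks ((p₀ : ℂ) • Matrix.vecMulVec φ₀ (star φ₀)) C
          Cᴴ ((p₁ : ℂ) • Matrix.vecMulVec φ₁ (star φ₁))).PosSemidef) := by
  rintro ⟨hρ, hρ_pt⟩
  have hC_zero : C = 0 := eq_zero_of_mulVec_orthogonal_eq_zero hunit₀ hunit₁ hover_lt
    (fun _ hx => hρ.mulVec₂₁_eq_zero_of_mulVec₁₁_eq_zero (smul_vecMulVec_star_mulVec_eq_zero _ hx))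
    (fun _ hx => hρ_pt.mulVec₁₂_eq_zero_of_mulVec₂₂_eq_zero (smul_vecMulVec_star_mulVec_eq_zero _ hx))
  exact hC (by rw [hC_zero, trace_zero])

/-- A bipartite qubit-qubit state whose two conditional states on
Bob's side are pure, non-identical and non-orthogonal (i.e. `0 < |⟨φ₀,φ₁⟩| < 1`),
and whose off-diagonal block `C` has nonzero trace, cannot have both itself and
its partial transpose (w.r.t. the first block factor) positive semidefinite. -/
theorem pure_conditional_states_not_ppt
    (φ₀ φ₁ : Fin 2 → ℂ)
    (hunit₀ : star φ₀ ⬝ᵥ φ₀ = 1) (hunit₁ : star φ₁ ⬝ᵥ φ₁ = 1)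
    (hover_pos : 0 < ‖star φ₀ ⬝ᵥ φ₁‖)
    (hover_lt : ‖star φ₀ ⬝ᵥ φ₁‖ < 1)
    (p₀ p₁ : ℝ) (hp₀ : 0 < p₀) (hp₁ : 0 < p₁)
    (C : Matrix (Fin 2) (Fin 2) ℂ) (hC : C.trace ≠ 0) :
    ¬ ((Matrix.fromBlocks ((p₀ : ℂ) • Matrix.vecMulVec φ₀ (star φ₀)) Cᴴ
          C ((p₁ : ℂ) • Matrix.vecMulVec φ₁ (star φ₁))).PosSemidef ∧
       (Matrix.fromBlocks ((p₀ : ℂ) • Matrix.vecMulVec φ₀ (star φ₀)) C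
          Cᴴ ((p₁ : ℂ) • Matrix.vecMulVec φ₁ (star φ₁))).PosSemidef) :=
  pure_conditional_states_not_ppt_general φ₀ φ₁ hunit₀ hunit₁ hover_lt p₀ p₁ C hC
end

section
/- Let p₀ > 0 be real, let E₁₁ denote the 2×2 matrix with a 1 in the (1,1) entry and 0 elsewhere, let σ be any 2×2 complex matrix, and let C be a 2×2 complex matrix. If the 4×4 block matrix ρ = [[p₀·E₁₁, Cᴴ],[C, σ]] is positive semidefinite and its partial transpose with respect to the block factor, [[p₀·E₁₁, C],[Cᴴ, σ]], is also positive semidefinite, then C = (Tr C)·E₁₁, i.e. all entries of C vanish except the (1,1) entry, which equals Tr C. -/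
open Matrix
open scoped ComplexOrder

/-!
A positive semidefinite matrix with a vanishing diagonal entry has the whole corresponding row and
column vanishing, since `eᵢ† M eᵢ = 0` forces `M eᵢ = 0`. In both `ρ` and its partial transpose the
diagonal entry `(1, 1)` of `p₀ • E₁₁` (indices start at `0`) is zero; the column of `ρ` through it is the second
column of `C`, and the column of the partial transpose through it is the conjugated second row
of `C`. What survives of `C` is the `(0, 0)` entry, which is then its trace.
-/

namespace Matrix

variable {𝕜 : Type*} [RCLike 𝕜] {n : Type*} [Fintype n]

theorem PosSemidef.apply_eq_zero_of_diag_eq_zero {M : Matrix n n 𝕜} (hM : M.PosSemidef) {i : n}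
    (hii : M i i = 0) (j : n) : M j i = 0 := by
  classical
  have hMi : M *ᵥ Pi.single i 1 = 0 :=
    (hM.dotProduct_mulVec_zero_iff _).mp (by simp [mulVec_single, hii])
  simpa [mulVec_single] using congrFun hMi j

theorem PosSemidef.fromBlocks₂₁_apply_eq_zero {m : Type*} [Fintype m]
    {A : Matrix n n 𝕜} {B : Matrix n m 𝕜} {C : Matrix m n 𝕜} {D : Matrix m m 𝕜}
    (h : (fromBlocks A B C D).PosSemidef) {i : n} (hii : A i i = 0) (j : m) : C j i = 0 :=
  h.apply_eq_zero_of_diag_eq_zero (i := Sum.inl i) hii (Sum.inr j)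

theorem eq_trace_smul_single_zero_zero {R : Type*} [Semiring R] {C : Matrix (Fin 2) (Fin 2) R}
    (hcol : ∀ j, C j 1 = 0) (hrow : ∀ j, C 1 j = 0) : C = C.trace • single 0 0 1 := by
  ext i j
  fin_cases i <;> fin_cases j <;> simp [trace_fin_two, hcol, hrow]

end Matrix

theorem ppt_forces_offdiagonal_block_concentrated_general
    (p₀ : ℝ)
    (σ C : Matrix (Fin 2) (Fin 2) ℂ)
    (E₁₁ : Matrix (Fin 2) (Fin 2) ℂ)
    (hE : E₁₁ = Matrix.single 0 0 1)
    (hρ : (Matrix.fromBlocks ((p₀ : ℂ) • E₁₁) Cᴴ C σ).PosSemidef)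
    (hρTA : (Matrix.fromBlocks ((p₀ : ℂ) • E₁₁) C Cᴴ σ).PosSemidef) :
    C = C.trace • E₁₁ := by
  subst hE
  have hdiag : ((p₀ : ℂ) • single (0 : Fin 2) (0 : Fin 2) (1 : ℂ)) 1 1 = 0 := by simp
  refine eq_trace_smul_single_zero_zero (hρ.fromBlocks₂₁_apply_eq_zero hdiag) fun j => ?_
  simpa using hρTA.fromBlocks₂₁_apply_eq_zero hdiag j

/-- If `ρ = [[p₀·E₁₁, Cᴴ],[C, σ]]` and its partial transpose
`[[p₀·E₁₁, C],[Cᴴ, σ]]` are both positive semidefinite, then all entries of `C`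
vanish except the (1,1) entry, i.e. `C = (Tr C) · E₁₁`. -/
theorem ppt_forces_offdiagonal_block_concentrated
    (p₀ : ℝ) (hp₀ : 0 < p₀)
    (σ C : Matrix (Fin 2) (Fin 2) ℂ)
    (E₁₁ : Matrix (Fin 2) (Fin 2) ℂ)
    (hE : E₁₁ = Matrix.single 0 0 1)
    (hρ : (Matrix.fromBlocks ((p₀ : ℂ) • E₁₁) Cᴴ C σ).PosSemidef)
    (hρTA : (Matrix.fromBlocks ((p₀ : ℂ) • E₁₁) C Cᴴ σ).PosSemidef) :
    C = C.trace • E₁₁ :=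
  ppt_forces_offdiagonal_block_concentrated_general p₀ σ C E₁₁ hE hρ hρTA
end

section
/- Let H be a complex Hilbert space, let X and Y be self-adjoint bounded (continuous) linear operators on H, and let v ∈ H be a unit vector such that (X∘Y − Y∘X) v = i·v. Define the 3×3 complex matrix η by η = [[1, ⟨X⟩, ⟨Y⟩],[⟨X⟩, ⟨X²⟩, ⟨S(XY)⟩],[⟨Y⟩, ⟨S(XY)⟩, ⟨Y²⟩]], where ⟨A⟩ := ⟪v, A v⟫ and S(XY) := (X∘Y + Y∘X)/2 (all these expectation values are real). Then the matrix η + (i/2)·J̃ is positive semidefinite. -/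
open Matrix
open scoped ComplexOrder InnerProductSpace

/-!
The matrix `η + (i/2) J̃` is the transposed Gram matrix of `v, Xv, Yv`, hence positive
semidefinite. Self-adjointness moves `X` and `Y` across the inner product, and the commutation
relation `⟨XY⟩ - ⟨YX⟩ = i` turns the off-diagonal entries `⟨S(XY)⟩ ∓ i/2` into `⟨YX⟩`, `⟨XY⟩`.
-/

theorem inner_comp_sub_inner_comp_eq_of_commutator_apply_eq_smul
    {𝕜 E : Type*} [RCLike 𝕜] [SeminormedAddCommGroup E] [InnerProductSpace 𝕜 E]
    {X Y : E →L[𝕜] E} {v : E} {c : 𝕜} (h : (X ∘L Y - Y ∘L X) v = c • v) :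
    ⟪v, X (Y v)⟫_𝕜 - ⟪v, Y (X v)⟫_𝕜 = c * ⟪v, v⟫_𝕜 := by
  simpa only [_root_.sub_apply, ContinuousLinearMap.comp_apply, inner_sub_right,
    inner_smul_right] using congrArg (⟪v, ·⟫_𝕜) h

theorem evm_add_smul_Jt_eq_transpose_gram
    {H : Type*} [NormedAddCommGroup H] [InnerProductSpace ℂ H] [CompleteSpace H]
    {X Y : H →L[ℂ] H} (hX : IsSelfAdjoint X) (hY : IsSelfAdjoint Y) {v : H} (hv : ‖v‖ = 1)
    (hccr : (X ∘L Y - Y ∘L X) v = Complex.I • v) :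
    !![1, ⟪v, X v⟫_ℂ, ⟪v, Y v⟫_ℂ;
       ⟪v, X v⟫_ℂ, ⟪v, X (X v)⟫_ℂ, ⟪v, ((2 : ℂ)⁻¹ • (X ∘L Y + Y ∘L X)) v⟫_ℂ;
       ⟪v, Y v⟫_ℂ, ⟪v, ((2 : ℂ)⁻¹ • (X ∘L Y + Y ∘L X)) v⟫_ℂ, ⟪v, Y (Y v)⟫_ℂ] +
      (Complex.I / 2) • !![0, 0, 0; 0, 0, -1; 0, 1, 0] =
    (gram ℂ ![v, X v, Y v])ᵀ := by
  have hvv : ⟪v, v⟫_ℂ = 1 := inner_self_eq_one_of_norm_eq_one hv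
  have hcomm := inner_comp_sub_inner_comp_eq_of_commutator_apply_eq_smul hccr
  rw [hvv, mul_one] at hcomm
  have hXs : ∀ u w : H, ⟪X u, w⟫_ℂ = ⟪u, X w⟫_ℂ := hX.isSymmetric
  have hYs : ∀ u w : H, ⟪Y u, w⟫_ℂ = ⟪u, Y w⟫_ℂ := hY.isSymmetric
  ext j k
  fin_cases j <;> fin_cases k <;> simp [hvv, hXs, hYs, -inner_self_eq_norm_sq_to_K]
  · linear_combination hcomm / 2
  · linear_combination -hcomm / 2

/-- For self-adjoint bounded operators `X`, `Y` on a complex Hilbert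
space and a unit vector `v` with `(XY - YX) v = i·v`, the expectation value matrix
`η = [[1, ⟨X⟩, ⟨Y⟩],[⟨X⟩, ⟨X²⟩, ⟨S(XY)⟩],[⟨Y⟩, ⟨S(XY)⟩, ⟨Y²⟩]]` satisfies
`η + (i/2)·J̃ ≥ 0`, where `J̃` has only nonzero entries `(J̃)₂₃ = -1`, `(J̃)₃₂ = 1`. -/
theorem evm_uncertainty_psd
    {H : Type*} [NormedAddCommGroup H] [InnerProductSpace ℂ H] [CompleteSpace H]
    (X Y : H →L[ℂ] H) (hX : IsSelfAdjoint X) (hY : IsSelfAdjoint Y)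
    (v : H) (hv : ‖v‖ = 1)
    (hccr : (X ∘L Y - Y ∘L X) v = Complex.I • v)
    (η : Matrix (Fin 3) (Fin 3) ℂ)
    (hη : η = !![1, ⟪v, X v⟫_ℂ, ⟪v, Y v⟫_ℂ;
                 ⟪v, X v⟫_ℂ, ⟪v, X (X v)⟫_ℂ, ⟪v, ((2 : ℂ)⁻¹ • (X ∘L Y + Y ∘L X)) v⟫_ℂ;
                 ⟪v, Y v⟫_ℂ, ⟪v, ((2 : ℂ)⁻¹ • (X ∘L Y + Y ∘L X)) v⟫_ℂ, ⟪v, Y (Y v)⟫_ℂ])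
    (Jt : Matrix (Fin 3) (Fin 3) ℂ)
    (hJ : Jt = !![0, 0, 0; 0, 0, -1; 0, 1, 0]) :
    (η + (Complex.I / 2) • Jt).PosSemidef := by
  rw [hη, hJ, evm_add_smul_Jt_eq_transpose_gram hX hY hv hccr]
  exact posSemidef_transpose_iff.mpr (posSemidef_gram ℂ _)
end

section
/- Let p₁, …, p_N be nonnegative real numbers, let A₁, …, A_N be 2×2 complex positive semidefinite matrices, and let η₁, …, η_N be 3×3 complex Hermitian matrices such that η_k + (i/2)·J̃ and η_k − (i/2)·J̃ are positive semidefinite for every k. Define χ := Σ_k p_k · (A_k ⊗ η_k) and ρ_A := Σ_k p_k · A_k. Then both χ + (i/2)·(ρ_A ⊗ J̃) and χ − (i/2)·(ρ_A ⊗ J̃) are positive semidefinite; in particular χ itself is positive semidefinite. -/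
open Matrix Kronecker
open scoped ComplexOrder

/-! Since `J̃` enters linearly, `χ ± (i/2) (ρ_A ⊗ J̃) = Σ_k p_k A_k ⊗ (η_k ± (i/2) J̃)`, a
nonnegative combination of Kronecker products of positive semidefinite matrices; likewise for `χ`,
since each `η_k` is the average of `η_k ± (i/2) J̃`. -/

namespace Matrix

theorem sum_smul_kronecker_add_smul {ι α l m n p : Type*} [Fintype ι] [CommSemiring α]
    (c : ι → α) (A : ι → Matrix l m α) (B : ι → Matrix n p α) (J : Matrix n p α) (s : α) :
    ∑ k, c k • (A k ⊗ₖ (B k + s • J)) =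
      ∑ k, c k • (A k ⊗ₖ B k) + s • ((∑ k, c k • A k) ⊗ₖ J) := by
  ext ⟨i, a⟩ ⟨j, b⟩
  simp only [add_apply, sum_apply, smul_apply, kroneckerMap_apply, smul_eq_mul,
    Finset.sum_mul, Finset.mul_sum, ← Finset.sum_add_distrib]
  exact Finset.sum_congr rfl fun k _ => by ring

theorem sum_smul_kronecker_sub_smul {ι α l m n p : Type*} [Fintype ι] [CommRing α]
    (c : ι → α) (A : ι → Matrix l m α) (B : ι → Matrix n p α) (J : Matrix n p α) (s : α) :
    ∑ k, c k • (A k ⊗ₖ (B k - s • J)) =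
      ∑ k, c k • (A k ⊗ₖ B k) - s • ((∑ k, c k • A k) ⊗ₖ J) := by
  simpa only [sub_eq_add_neg, neg_smul] using sum_smul_kronecker_add_smul c A B J (-s)

variable {𝕜 : Type*} [RCLike 𝕜]

theorem posSemidef_sum_smul_kronecker {ι m n : Type*} [Fintype ι] [Fintype m] [Fintype n]
    {c : ι → 𝕜} (hc : ∀ k, 0 ≤ c k) {A : ι → Matrix m m 𝕜} (hA : ∀ k, (A k).PosSemidef)
    {B : ι → Matrix n n 𝕜} (hB : ∀ k, (B k).PosSemidef) :
    (∑ k, c k • (A k ⊗ₖ B k)).PosSemidef :=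
  posSemidef_sum _ fun k _ => ((hA k).kronecker (hB k)).smul (hc k)

theorem PosSemidef.of_add_smul_of_sub_smul {n : Type*} [Fintype n] {B J : Matrix n n 𝕜} {s : 𝕜}
    (hplus : (B + s • J).PosSemidef) (hminus : (B - s • J).PosSemidef) : B.PosSemidef := by
  have hB : B = (2⁻¹ : ℝ) • ((B + s • J) + (B - s • J)) := by
    rw [add_add_sub_cancel, ← two_smul ℝ B, smul_smul]
    norm_num
  rw [hB]
  exact (hplus.add hminus).smul (by norm_num)

end Matrix

theorem separable_evm_condition_general
    (N : ℕ) (p : Fin N → ℝ) (hp : ∀ k, 0 ≤ p k)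
    (A : Fin N → Matrix (Fin 2) (Fin 2) ℂ) (hA : ∀ k, (A k).PosSemidef)
    (η : Fin N → Matrix (Fin 3) (Fin 3) ℂ)
    (Jt : Matrix (Fin 3) (Fin 3) ℂ)
    (hplus : ∀ k, (η k + (Complex.I / 2) • Jt).PosSemidef)
    (hminus : ∀ k, (η k - (Complex.I / 2) • Jt).PosSemidef)
    (χ : Matrix (Fin 2 × Fin 3) (Fin 2 × Fin 3) ℂ)
    (hχ : χ = ∑ k, (p k : ℂ) • (A k ⊗ₖ η k))
    (ρA : Matrix (Fin 2) (Fin 2) ℂ)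
    (hρA : ρA = ∑ k, (p k : ℂ) • A k) :
    (χ + (Complex.I / 2) • (ρA ⊗ₖ Jt)).PosSemidef ∧
      (χ - (Complex.I / 2) • (ρA ⊗ₖ Jt)).PosSemidef ∧
      χ.PosSemidef := by
  subst hχ hρA
  have hp' : ∀ k, (0 : ℂ) ≤ p k := fun k => Complex.zero_le_real.mpr (hp k)
  refine ⟨?_, ?_, posSemidef_sum_smul_kronecker hp' hA fun k =>
    (hplus k).of_add_smul_of_sub_smul (hminus k)⟩
  · rw [← sum_smul_kronecker_add_smul]
    exact posSemidef_sum_smul_kronecker hp' hA hplus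
  · rw [← sum_smul_kronecker_sub_smul]
    exact posSemidef_sum_smul_kronecker hp' hA hminus

/-- Observation 2: For a separable combination
`χ = Σ_k p_k (A_k ⊗ η_k)` with `p_k ≥ 0`, `A_k` PSD and `η_k` Hermitian with
`η_k ± (i/2)·J̃ ≥ 0`, letting `ρ_A = Σ_k p_k A_k`, one has
`χ ± (i/2)·(ρ_A ⊗ J̃) ≥ 0`; in particular `χ ≥ 0`. -/
theorem separable_evm_condition
    (N : ℕ) (p : Fin N → ℝ) (hp : ∀ k, 0 ≤ p k)
    (A : Fin N → Matrix (Fin 2) (Fin 2) ℂ) (hA : ∀ k, (A k).PosSemidef)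
    (η : Fin N → Matrix (Fin 3) (Fin 3) ℂ) (hη : ∀ k, (η k).IsHermitian)
    (Jt : Matrix (Fin 3) (Fin 3) ℂ)
    (hJ : Jt = !![0, 0, 0; 0, 0, -1; 0, 1, 0])
    (hplus : ∀ k, (η k + (Complex.I / 2) • Jt).PosSemidef)
    (hminus : ∀ k, (η k - (Complex.I / 2) • Jt).PosSemidef)
    (χ : Matrix (Fin 2 × Fin 3) (Fin 2 × Fin 3) ℂ)
    (hχ : χ = ∑ k, (p k : ℂ) • (A k ⊗ₖ η k))
    (ρA : Matrix (Fin 2) (Fin 2) ℂ)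
    (hρA : ρA = ∑ k, (p k : ℂ) • A k) :
    (χ + (Complex.I / 2) • (ρA ⊗ₖ Jt)).PosSemidef ∧
      (χ - (Complex.I / 2) • (ρA ⊗ₖ Jt)).PosSemidef ∧
      χ.PosSemidef :=
  separable_evm_condition_general N p hp A hA η Jt hplus hminus χ hχ ρA hρA
end

section
/- Let ρ_A be a 2×2 complex matrix with real entries satisfying ρ_Aᵀ = ρ_A, and let X be a 6×6 complex Hermitian matrix such that both X + (i/2)·(ρ_A ⊗ J̃) and X − (i/2)·(ρ_A ⊗ J̃) are positive semidefinite. Define X̄ := (X + Xᵀ)/2, which equals the entrywise real part of X. Then: (a) X̄ is a real symmetric matrix; (b) both X̄ + (i/2)·(ρ_A ⊗ J̃) and X̄ − (i/2)·(ρ_A ⊗ J̃) are positive semidefinite; (c) X̄ agrees with X in every entry of X that is real; in particular, if the two diagonal 3×3 blocks of X are real matrices and the (1,4) and (4,1) entries of X are real, then X̄ has the same diagonal 3×3 blocks and the same (1,4) and (4,1) entries as X. -/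
open Matrix
open scoped ComplexOrder

/-!
Since `X` is Hermitian, `Xᵀ` is its entrywise conjugate, so `X̄ = (X + Xᵀ)/2` is its real part.
The matrix `M = (i/2)·(ρ_A ⊗ J̃)` is antisymmetric (`ρ_A` symmetric, `J̃` antisymmetric), so
transposing the constraint `X - M ≥ 0` gives `Xᵀ + M ≥ 0`; averaging this with `X + M ≥ 0` gives
`X̄ + M ≥ 0`, and symmetrically `X̄ - M ≥ 0`.
-/

/-- The Kronecker product `ρ ⊗ J` of a 2×2 matrix with a 3×3 matrix, written as a
6×6 matrix in 3×3 blocks: `[[ρ₀₀·J, ρ₀₁·J],[ρ₁₀·J, ρ₁₁·J]]`. -/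
def kronBlock (ρ : Matrix (Fin 2) (Fin 2) ℂ) (J : Matrix (Fin 3) (Fin 3) ℂ) :
    Matrix (Fin 3 ⊕ Fin 3) (Fin 3 ⊕ Fin 3) ℂ :=
  Matrix.fromBlocks (ρ 0 0 • J) (ρ 0 1 • J) (ρ 1 0 • J) (ρ 1 1 • J)

theorem kronBlock_transpose (ρ : Matrix (Fin 2) (Fin 2) ℂ) (J : Matrix (Fin 3) (Fin 3) ℂ) :
    (kronBlock ρ J)ᵀ = kronBlock ρᵀ Jᵀ := by
  simp only [kronBlock, fromBlocks_transpose, transpose_smul, transpose_apply]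

theorem kronBlock_neg_right (ρ : Matrix (Fin 2) (Fin 2) ℂ) (J : Matrix (Fin 3) (Fin 3) ℂ) :
    kronBlock ρ (-J) = -kronBlock ρ J := by
  simp only [kronBlock, smul_neg, fromBlocks_neg]

theorem transpose_rotationGeneratorX :
    (!![0, 0, 0; 0, 0, -1; 0, 1, 0] : Matrix (Fin 3) (Fin 3) ℂ)ᵀ =
      -!![0, 0, 0; 0, 0, -1; 0, 1, 0] := by
  ext i j
  fin_cases i <;> fin_cases j <;> simp

theorem Matrix.IsHermitian.half_add_transpose_apply {n : Type*} {X : Matrix n n ℂ}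
    (hX : X.IsHermitian) (i j : n) : ((2 : ℂ)⁻¹ • (X + Xᵀ)) i j = ((X i j).re : ℂ) := by
  rw [Complex.re_eq_add_conj, smul_apply, add_apply, transpose_apply, ← hX.apply j i,
    smul_eq_mul, Complex.star_def]
  ring

theorem Matrix.PosSemidef.half_add_transpose_add {𝕜 n : Type*} [RCLike 𝕜] [Fintype n]
    {X M : Matrix n n 𝕜} (hM : Mᵀ = -M) (hplus : (X + M).PosSemidef)
    (hminus : (X - M).PosSemidef) : ((2 : 𝕜)⁻¹ • (X + Xᵀ) + M).PosSemidef := by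
  have hmean : (2 : 𝕜)⁻¹ • (X + Xᵀ) + M = (2 : 𝕜)⁻¹ • ((X + M) + (X - M)ᵀ) := by
    rw [transpose_sub, hM]
    module
  rw [hmean]
  exact (hplus.add hminus.transpose).smul (by positivity)

theorem real_solution_of_solution_general
    (ρA : Matrix (Fin 2) (Fin 2) ℂ)
    (hsym : ρAᵀ = ρA)
    (Jt : Matrix (Fin 3) (Fin 3) ℂ)
    (hJ : Jt = !![0, 0, 0; 0, 0, -1; 0, 1, 0])
    (X : Matrix (Fin 3 ⊕ Fin 3) (Fin 3 ⊕ Fin 3) ℂ) (hX : X.IsHermitian)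
    (hplus : (X + (Complex.I / 2) • kronBlock ρA Jt).PosSemidef)
    (hminus : (X - (Complex.I / 2) • kronBlock ρA Jt).PosSemidef)
    (Xbar : Matrix (Fin 3 ⊕ Fin 3) (Fin 3 ⊕ Fin 3) ℂ)
    (hXbar : Xbar = (2 : ℂ)⁻¹ • (X + Xᵀ)) :
    -- `X̄` is the entrywise real part of `X`
    (∀ i j, Xbar i j = ((X i j).re : ℂ)) ∧
    -- (a) `X̄` is real and symmetric
    (∀ i j, (Xbar i j).im = 0) ∧ Xbarᵀ = Xbar ∧
    -- (b) the separability constraints still hold for `X̄`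
    (Xbar + (Complex.I / 2) • kronBlock ρA Jt).PosSemidef ∧
    (Xbar - (Complex.I / 2) • kronBlock ρA Jt).PosSemidef ∧
    -- (c) `X̄` agrees with `X` in every real entry
    (∀ i j, (X i j).im = 0 → Xbar i j = X i j) ∧
    -- in particular: same real diagonal blocks and real (1,4),(4,1) entries
    (((∀ k l, (X.toBlocks₁₁ k l).im = 0) ∧ (∀ k l, (X.toBlocks₂₂ k l).im = 0) ∧
        (X (Sum.inl 0) (Sum.inr 0)).im = 0 ∧ (X (Sum.inr 0) (Sum.inl 0)).im = 0) →
      (Xbar.toBlocks₁₁ = X.toBlocks₁₁ ∧ Xbar.toBlocks₂₂ = X.toBlocks₂₂ ∧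
        Xbar (Sum.inl 0) (Sum.inr 0) = X (Sum.inl 0) (Sum.inr 0) ∧
        Xbar (Sum.inr 0) (Sum.inl 0) = X (Sum.inr 0) (Sum.inl 0))) := by
  subst hXbar hJ
  set M := (Complex.I / 2) • kronBlock ρA !![0, 0, 0; 0, 0, -1; 0, 1, 0]
  have hM : Mᵀ = -M := by
    rw [transpose_smul, kronBlock_transpose, hsym, transpose_rotationGeneratorX,
      kronBlock_neg_right, smul_neg]
  have hre := hX.half_add_transpose_apply
  have hagree : ∀ i j, (X i j).im = 0 → ((2 : ℂ)⁻¹ • (X + Xᵀ)) i j = X i j := fun i j h ↦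
    (hre i j).trans (Complex.conj_eq_iff_re.1 (Complex.conj_eq_iff_im.2 h))
  refine ⟨hre, fun i j ↦ by rw [hre, Complex.ofReal_im],
    by rw [transpose_smul, transpose_add, transpose_transpose, add_comm],
    hplus.half_add_transpose_add hM hminus, ?_, hagree, ?_⟩
  · rw [sub_eq_add_neg]
    refine PosSemidef.half_add_transpose_add (by rw [transpose_neg, hM]) ?_ ?_
    · rwa [← sub_eq_add_neg]
    · rwa [sub_neg_eq_add]
  · rintro ⟨h11, h22, h14, h41⟩
    exact ⟨ext fun k l ↦ hagree _ _ (h11 k l), ext fun k l ↦ hagree _ _ (h22 k l),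
      hagree _ _ h14, hagree _ _ h41⟩

/-- Lemma 1: If `ρ_A` is real symmetric and the Hermitian 6×6
matrix `X` satisfies `X ± (i/2)·(ρ_A ⊗ J̃) ≥ 0`, then `X̄ := (X + Xᵀ)/2` (which is
the entrywise real part of `X`) is (a) real symmetric, (b) satisfies
`X̄ ± (i/2)·(ρ_A ⊗ J̃) ≥ 0`, and (c) agrees with `X` in every real entry of `X`;
in particular if the diagonal 3×3 blocks of `X` and its (1,4) and (4,1) entries
are real, then `X̄` has the same diagonal blocks and the same (1,4),(4,1) entries. -/
theorem real_solution_of_solution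
    (ρA : Matrix (Fin 2) (Fin 2) ℂ)
    (hreal : ∀ i j, (ρA i j).im = 0) (hsym : ρAᵀ = ρA)
    (Jt : Matrix (Fin 3) (Fin 3) ℂ)
    (hJ : Jt = !![0, 0, 0; 0, 0, -1; 0, 1, 0])
    (X : Matrix (Fin 3 ⊕ Fin 3) (Fin 3 ⊕ Fin 3) ℂ) (hX : X.IsHermitian)
    (hplus : (X + (Complex.I / 2) • kronBlock ρA Jt).PosSemidef)
    (hminus : (X - (Complex.I / 2) • kronBlock ρA Jt).PosSemidef)
    (Xbar : Matrix (Fin 3 ⊕ Fin 3) (Fin 3 ⊕ Fin 3) ℂ)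
    (hXbar : Xbar = (2 : ℂ)⁻¹ • (X + Xᵀ)) :
    -- `X̄` is the entrywise real part of `X`
    (∀ i j, Xbar i j = ((X i j).re : ℂ)) ∧
    -- (a) `X̄` is real and symmetric
    (∀ i j, (Xbar i j).im = 0) ∧ Xbarᵀ = Xbar ∧
    -- (b) the separability constraints still hold for `X̄`
    (Xbar + (Complex.I / 2) • kronBlock ρA Jt).PosSemidef ∧
    (Xbar - (Complex.I / 2) • kronBlock ρA Jt).PosSemidef ∧
    -- (c) `X̄` agrees with `X` in every real entry
    (∀ i j, (X i j).im = 0 → Xbar i j = X i j) ∧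
    -- in particular: same real diagonal blocks and real (1,4),(4,1) entries
    (((∀ k l, (X.toBlocks₁₁ k l).im = 0) ∧ (∀ k l, (X.toBlocks₂₂ k l).im = 0) ∧
        (X (Sum.inl 0) (Sum.inr 0)).im = 0 ∧ (X (Sum.inr 0) (Sum.inl 0)).im = 0) →
      (Xbar.toBlocks₁₁ = X.toBlocks₁₁ ∧ Xbar.toBlocks₂₂ = X.toBlocks₂₂ ∧
        Xbar (Sum.inl 0) (Sum.inr 0) = X (Sum.inl 0) (Sum.inr 0) ∧
        Xbar (Sum.inr 0) (Sum.inl 0) = X (Sum.inr 0) (Sum.inl 0))) :=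
  real_solution_of_solution_general ρA hsym Jt hJ X hX hplus hminus Xbar hXbar
end
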